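/- Let u be a C³ solution of the minimal surface equation (1+|∇u|²)Δu − ∑_{α,β} u_α u_β u_{αβ} = 0 on an open set U ⊂ ℝⁿ, and set φ = |∇u|²/2. Then φ satisfies the differential inequality ∑_{α,β} [(1+|∇u|²)δ_{αβ} − u_α u_β] φ_{αβ} ≥ ∑_γ φ_γ² − 2Δu·∑_γ u_γ φ_γ ≥ −2Δu·⟨∇u, ∇φ⟩ on U. In particular φ cannot attain an interior strict maximum unless ∇φ vanishes there. -/

import Mathlib

noncomputable def pd (n : ℕ) (u : EuclideanSpace ℝ (Fin n) → ℝ) (α : Fin n)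
    (x : EuclideanSpace ℝ (Fin n)) : ℝ :=
  fderiv ℝ u x (EuclideanSpace.single α 1)

noncomputable def pd2 (n : ℕ) (u : EuclideanSpace ℝ (Fin n) → ℝ) (α β : Fin n)
    (x : EuclideanSpace ℝ (Fin n)) : ℝ :=
  pd n (pd n u β) α x

section helpers
variable {n : ℕ}

lemma pd_congr_nhds {f g : EuclideanSpace ℝ (Fin n) → ℝ} {x} (h : f =ᶠ[nhds x] g) (γ : Fin n) :
    pd n f γ x = pd n g γ x := by
  unfold pd; rw [h.fderiv_eq]

lemma pd_sum {ι : Type*} (s : Finset ι) (f : ι → EuclideanSpace ℝ (Fin n) → ℝ) {x}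
    (hf : ∀ i ∈ s, DifferentiableAt ℝ (f i) x) (γ : Fin n) :
    pd n (fun y => ∑ i ∈ s, f i y) γ x = ∑ i ∈ s, pd n (f i) γ x := by
  unfold pd; rw [fderiv_fun_sum hf]; simp

lemma pd_mul {f g : EuclideanSpace ℝ (Fin n) → ℝ} {x} (hf : DifferentiableAt ℝ f x)
    (hg : DifferentiableAt ℝ g x) (γ : Fin n) :
    pd n (fun y => f y * g y) γ x = pd n f γ x * g x + f x * pd n g γ x := by
  unfold pd; rw [fderiv_fun_mul hf hg]; simp [mul_comm, add_comm]

lemma pd_div_const {f : EuclideanSpace ℝ (Fin n) → ℝ} {x} (hf : DifferentiableAt ℝ f x)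
    (c : ℝ) (γ : Fin n) :
    pd n (fun y => f y / c) γ x = pd n f γ x / c := by
  unfold pd
  simp only [div_eq_mul_inv]
  rw [fderiv_mul_const hf]; simp [mul_comm]

lemma pd_sq {f : EuclideanSpace ℝ (Fin n) → ℝ} {x} (hf : DifferentiableAt ℝ f x) (γ : Fin n) :
    pd n (fun y => f y ^ 2) γ x = 2 * f x * pd n f γ x := by
  have := pd_mul (n := n) hf hf γ
  simp only [← sq] at this
  rw [this]; ring

lemma pd_const_mul {f : EuclideanSpace ℝ (Fin n) → ℝ} {x} (hf : DifferentiableAt ℝ f x)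
    (c : ℝ) (γ : Fin n) :
    pd n (fun y => c * f y) γ x = c * pd n f γ x := by
  unfold pd; rw [fderiv_const_mul hf]; simp

lemma pd_one_add {f : EuclideanSpace ℝ (Fin n) → ℝ} {x} (hf : DifferentiableAt ℝ f x) (γ : Fin n) :
    pd n (fun y => 1 + f y) γ x = pd n f γ x := by
  unfold pd; rw [fderiv_const_add]

lemma pd_sub {f g : EuclideanSpace ℝ (Fin n) → ℝ} {x} (hf : DifferentiableAt ℝ f x)
    (hg : DifferentiableAt ℝ g x) (γ : Fin n) :
    pd n (fun y => f y - g y) γ x = pd n f γ x - pd n g γ x := by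
  unfold pd; rw [fderiv_fun_sub hf hg]; simp

lemma contDiffOn_pd {u : EuclideanSpace ℝ (Fin n) → ℝ} {U : Set (EuclideanSpace ℝ (Fin n))}
    {m k : ℕ} (hU : IsOpen U) (hu : ContDiffOn ℝ k u U) (hk : m + 1 ≤ k) (δ : Fin n) :
    ContDiffOn ℝ m (pd n u δ) U := by
  have h1 : ContDiffOn ℝ m (fderiv ℝ u) U := hu.fderiv_of_isOpen hU (by exact_mod_cast hk)
  exact h1.clm_apply contDiffOn_const

lemma diffAt_of_contDiffOn {f : EuclideanSpace ℝ (Fin n) → ℝ} {U : Set (EuclideanSpace ℝ (Fin n))}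
    {m : ℕ} (hU : IsOpen U) (hf : ContDiffOn ℝ m f U) (hm : 1 ≤ m) {x} (hx : x ∈ U) :
    DifferentiableAt ℝ f x :=
  (hf.contDiffAt (hU.mem_nhds hx)).differentiableAt (by norm_cast; omega)

lemma pd2_symm {u : EuclideanSpace ℝ (Fin n) → ℝ} {x} (hu : ContDiffAt ℝ 2 u x) (α β : Fin n) :
    pd2 n u α β x = pd2 n u β α x := by
  have hsymm := hu.isSymmSndFDerivAt (by simp [minSmoothness_of_isRCLikeNormedField])
  have hd : DifferentiableAt ℝ (fderiv ℝ u) x := (hu.fderiv_right (m := 1) (by norm_num)).differentiableAt one_ne_zero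
  have key : ∀ v w : EuclideanSpace ℝ (Fin n),
      fderiv ℝ (fun y => fderiv ℝ u y w) x v = fderiv ℝ (fderiv ℝ u) x v w := by
    intro v w
    rw [fderiv_clm_apply hd (differentiableAt_const w)]
    simp
  unfold pd2 pd
  rw [key, key, hsymm]
end helpers


open Finset

lemma swap3 {n : ℕ} (F : Fin n → Fin n → Fin n → ℝ) :
    (∑ α, ∑ β, ∑ δ, F α β δ) = ∑ δ, ∑ α, ∑ β, F α β δ := by
  rw [show (∑ α, ∑ β, ∑ δ, F α β δ) = ∑ α, ∑ δ, ∑ β, F α β δ from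
    Finset.sum_congr rfl fun α _ => Finset.sum_comm]
  exact Finset.sum_comm

lemma key_algebra {n : ℕ} (g : Fin n → ℝ) (h : Fin n → Fin n → ℝ)
    (t : Fin n → Fin n → Fin n → ℝ)
    (hs : ∀ α β, h α β = h β α)
    (ht : ∀ α β δ, t α β δ = t δ α β)
    (hE : ∀ γ : Fin n, (∑ δ, 2 * g δ * h γ δ) * (∑ α, h α α)
        + (1 + ∑ δ, (g δ)^2) * (∑ α, t γ α α)
        - ∑ α, ∑ β, ((h γ α * g β + g α * h γ β) * h α β + g α * g β * t γ α β) = 0) :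
    (∑ γ, (∑ δ, g δ * h γ δ)^2)
        - 2 * (∑ α, h α α) * (∑ γ, g γ * ∑ δ, g δ * h γ δ)
      ≤ ∑ α, ∑ β, ((1 + ∑ γ, (g γ)^2) * (if α = β then (1:ℝ) else 0) - g α * g β)
          * (∑ δ, (h α δ * h β δ + g δ * t α β δ)) := by
  set G : ℝ := ∑ δ, (g δ)^2 with hG
  set Δ : ℝ := ∑ α, h α α with hΔ
  set P : Fin n → ℝ := fun γ => ∑ δ, g δ * h γ δ with hP
  have hPdef : ∀ γ, P γ = ∑ δ, g δ * h γ δ := fun γ => rfl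
  have hPrev : ∀ γ, (∑ δ, g δ * h δ γ) = P γ := fun γ =>
    Finset.sum_congr rfl (fun δ _ => by rw [hs])
  -- collapse the Kronecker delta
  have collapse : ∀ Z : Fin n → Fin n → ℝ,
      (∑ α, ∑ β, ((1 + G) * (if α = β then (1:ℝ) else 0) - g α * g β) * Z α β)
        = (1 + G) * ∑ α, Z α α - ∑ α, ∑ β, g α * g β * Z α β := by
    intro Z
    simp only [sub_mul, Finset.sum_sub_distrib, mul_ite, mul_one, mul_zero, ite_mul, zero_mul,
      Finset.sum_ite_eq, Finset.mem_univ, if_true, mul_assoc, ← Finset.mul_sum]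
  rw [collapse]
  -- split the diagonal sum
  have diag : (∑ α, ∑ δ, (h α δ * h α δ + g δ * t α α δ))
      = (∑ α, ∑ δ, h α δ * h α δ) + ∑ γ, g γ * ∑ α, t γ α α := by
    simp only [Finset.sum_add_distrib]
    congr 1
    rw [Finset.sum_comm]
    exact Finset.sum_congr rfl fun δ _ => by
      rw [Finset.mul_sum]; exact Finset.sum_congr rfl fun α _ => by rw [ht α α δ]
  -- split the off-diagonal sum
  have offd : (∑ α, ∑ β, g α * g β * ∑ δ, (h α δ * h β δ + g δ * t α β δ))
      = (∑ δ, (P δ)^2) + ∑ γ, g γ * ∑ α, ∑ β, g α * g β * t γ α β := by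
    have e1 : ∀ α β : Fin n, g α * g β * ∑ δ, (h α δ * h β δ + g δ * t α β δ)
        = (∑ δ, (g α * h α δ) * (g β * h β δ)) + ∑ δ, g δ * (g α * g β * t δ α β) := by
      intro α β
      rw [Finset.mul_sum, ← Finset.sum_add_distrib]
      exact Finset.sum_congr rfl fun δ _ => by rw [ht α β δ]; ring
    have e2 : (∑ α, ∑ β, g α * g β * ∑ δ, (h α δ * h β δ + g δ * t α β δ))
        = (∑ α, ∑ β, ∑ δ, (g α * h α δ) * (g β * h β δ))
          + ∑ α, ∑ β, ∑ δ, g δ * (g α * g β * t δ α β) := by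
      rw [← Finset.sum_add_distrib]
      refine Finset.sum_congr rfl fun α _ => ?_
      rw [← Finset.sum_add_distrib]
      exact Finset.sum_congr rfl fun β _ => e1 α β
    rw [e2, swap3 (fun α β δ => (g α * h α δ) * (g β * h β δ)),
      swap3 (fun α β δ => g δ * (g α * g β * t δ α β))]
    congr 1
    · refine Finset.sum_congr rfl fun δ _ => ?_
      rw [← Finset.sum_mul_sum, hPrev δ, sq]
    · refine Finset.sum_congr rfl fun δ _ => ?_
      rw [Finset.mul_sum]
      exact Finset.sum_congr rfl fun α _ => (Finset.mul_sum _ _ _).symm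
  -- the differentiated equation, cleaned up
  have hEred : ∀ γ : Fin n, (1 + G) * (∑ α, t γ α α) - (∑ α, ∑ β, g α * g β * t γ α β)
      = 2 * (∑ α, h γ α * P α) - 2 * P γ * Δ := by
    intro γ
    have e := hE γ
    have h2P : (∑ δ, 2 * g δ * h γ δ) = 2 * P γ := by
      rw [hPdef, Finset.mul_sum]
      exact Finset.sum_congr rfl fun δ _ => by ring
    have split : (∑ α, ∑ β, ((h γ α * g β + g α * h γ β) * h α β + g α * g β * t γ α β))
        = (∑ α, h γ α * P α) + (∑ β, h γ β * P β) + ∑ α, ∑ β, g α * g β * t γ α β := by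
      have e0 : ∀ α : Fin n, (∑ β, ((h γ α * g β + g α * h γ β) * h α β + g α * g β * t γ α β))
          = h γ α * P α + (∑ β, g α * (h γ β * h α β)) + ∑ β, g α * g β * t γ α β := by
        intro α
        rw [show (∑ β, ((h γ α * g β + g α * h γ β) * h α β + g α * g β * t γ α β))
            = ∑ β, (h γ α * (g β * h α β) + (g α * (h γ β * h α β) + g α * g β * t γ α β)) from
          Finset.sum_congr rfl fun β _ => by ring]
        rw [Finset.sum_add_distrib, Finset.sum_add_distrib, ← Finset.mul_sum, ← hPdef α, add_assoc]
      rw [show (∑ α, ∑ β, ((h γ α * g β + g α * h γ β) * h α β + g α * g β * t γ α β))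
          = ∑ α, (h γ α * P α + (∑ β, g α * (h γ β * h α β)) + ∑ β, g α * g β * t γ α β) from
        Finset.sum_congr rfl fun α _ => e0 α]
      rw [Finset.sum_add_distrib, Finset.sum_add_distrib]
      congr 2
      rw [Finset.sum_comm]
      refine Finset.sum_congr rfl fun β _ => ?_
      rw [show (∑ α, g α * (h γ β * h α β)) = h γ β * ∑ α, g α * h α β from by
        rw [Finset.mul_sum]; exact Finset.sum_congr rfl fun α _ => by ring]
      rw [hPrev β]
    rw [h2P, split] at e
    linarith
  -- multiply by g γ and sum
  have keyT : (1 + G) * (∑ γ, g γ * ∑ α, t γ α α)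
        - (∑ γ, g γ * ∑ α, ∑ β, g α * g β * t γ α β)
      = 2 * (∑ γ, (P γ)^2) - 2 * Δ * (∑ γ, g γ * P γ) := by
    have expand : (∑ γ, (g γ * ((1 + G) * (∑ α, t γ α α))
            - g γ * (∑ α, ∑ β, g α * g β * t γ α β)))
        = ∑ γ, (g γ * (2 * (∑ α, h γ α * P α)) - g γ * (2 * P γ * Δ)) :=
      Finset.sum_congr rfl fun γ _ => by rw [← mul_sub, ← mul_sub, hEred γ]
    rw [Finset.sum_sub_distrib, Finset.sum_sub_distrib] at expand
    have l1 : (∑ γ, g γ * ((1 + G) * (∑ α, t γ α α)))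
        = (1 + G) * ∑ γ, g γ * ∑ α, t γ α α := by
      rw [Finset.mul_sum]; exact Finset.sum_congr rfl fun γ _ => by ring
    have l2 : (∑ γ, g γ * (2 * (∑ α, h γ α * P α))) = 2 * ∑ γ, (P γ)^2 := by
      rw [show (∑ γ, g γ * (2 * (∑ α, h γ α * P α)))
          = ∑ γ, ∑ α, (g γ * h γ α) * (2 * P α) from
        Finset.sum_congr rfl fun γ _ => by
          rw [Finset.mul_sum, Finset.mul_sum]
          exact Finset.sum_congr rfl fun α _ => by ring]
      rw [Finset.sum_comm, Finset.mul_sum]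
      refine Finset.sum_congr rfl fun α _ => ?_
      rw [← Finset.sum_mul, hPrev α, sq]
      ring
    have l3 : (∑ γ, g γ * (2 * P γ * Δ)) = 2 * Δ * ∑ γ, g γ * P γ := by
      rw [Finset.mul_sum]; exact Finset.sum_congr rfl fun γ _ => by ring
    rw [l1, l2, l3] at expand
    linarith
  -- put everything together
  rw [diag, offd, mul_add]
  have hH2 : (0:ℝ) ≤ ∑ α, ∑ δ, h α δ * h α δ :=
    Finset.sum_nonneg fun α _ => Finset.sum_nonneg fun δ _ => mul_self_nonneg _
  have hGnn : (0:ℝ) ≤ G := Finset.sum_nonneg fun δ _ => sq_nonneg _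
  have h1G : (0:ℝ) ≤ (1 + G) * ∑ α, ∑ δ, h α δ * h α δ :=
    mul_nonneg (by linarith) hH2
  linarith



theorem stmt_12 (n : ℕ) (U : Set (EuclideanSpace ℝ (Fin n))) (hU : IsOpen U)
    (u : EuclideanSpace ℝ (Fin n) → ℝ) (hu : ContDiffOn ℝ 3 u U)
    (heq : ∀ x ∈ U,
      (1 + ∑ γ, (pd n u γ x)^2) * (∑ α, pd2 n u α α x)
        - ∑ α, ∑ β, pd n u α x * pd n u β x * pd2 n u α β x = 0) :
    ∀ x ∈ U,
      (∑ γ, (pd n (fun y => (∑ δ, (pd n u δ y)^2) / 2) γ x)^2)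
          - 2 * (∑ α, pd2 n u α α x) *
              (∑ γ, pd n u γ x * pd n (fun y => (∑ δ, (pd n u δ y)^2) / 2) γ x)
        ≤ ∑ α, ∑ β,
            ((1 + ∑ γ, (pd n u γ x)^2) * (if α = β then (1:ℝ) else 0)
                - pd n u α x * pd n u β x)
              * pd2 n (fun y => (∑ δ, (pd n u δ y)^2) / 2) α β x
      ∧ -(2 * (∑ α, pd2 n u α α x) *
              (∑ γ, pd n u γ x * pd n (fun y => (∑ δ, (pd n u δ y)^2) / 2) γ x))
          ≤ (∑ γ, (pd n (fun y => (∑ δ, (pd n u δ y)^2) / 2) γ x)^2)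
            - 2 * (∑ α, pd2 n u α α x) *
                (∑ γ, pd n u γ x * pd n (fun y => (∑ δ, (pd n u δ y)^2) / 2) γ x) := by
  intro x hx
  have hxn : U ∈ nhds x := hU.mem_nhds hx
  -- differentiability facts
  have h2 : ∀ δ, ContDiffOn ℝ 2 (pd n u δ) U := fun δ =>
    contDiffOn_pd hU hu (by norm_num) δ
  have h1 : ∀ α β, ContDiffOn ℝ 1 (pd2 n u α β) U := fun α β =>
    contDiffOn_pd hU (h2 β) (by norm_num) α
  have dAt1 : ∀ y ∈ U, ∀ δ, DifferentiableAt ℝ (pd n u δ) y := fun y hy δ =>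
    diffAt_of_contDiffOn hU (h2 δ) (by norm_num) hy
  have dAt2 : ∀ y ∈ U, ∀ α β, DifferentiableAt ℝ (pd2 n u α β) y := fun y hy α β =>
    diffAt_of_contDiffOn hU (h1 α β) le_rfl hy
  have dsum : ∀ y ∈ U, DifferentiableAt ℝ (fun z => ∑ δ, (pd n u δ z)^2) y := fun y hy =>
    DifferentiableAt.fun_sum fun δ _ => (dAt1 y hy δ).pow 2
  -- step 1 : first derivative of φ on U
  have step1 : ∀ y ∈ U, ∀ γ : Fin n,
      pd n (fun z => (∑ δ, (pd n u δ z)^2) / 2) γ y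
        = ∑ δ, pd n u δ y * pd2 n u γ δ y := by
    intro y hy γ
    have e1 := pd_div_const (n := n) (f := fun z => ∑ δ, (pd n u δ z)^2) (dsum y hy) 2 γ
    have e2 := pd_sum (n := n) Finset.univ (fun δ z => (pd n u δ z)^2)
      (fun δ _ => (dAt1 y hy δ).pow 2) γ
    have e3 : ∀ δ : Fin n, pd n (fun z => (pd n u δ z)^2) γ y
        = 2 * pd n u δ y * pd2 n u γ δ y := fun δ => pd_sq (dAt1 y hy δ) γ
    rw [e1, e2]
    rw [Finset.sum_congr rfl fun δ _ => e3 δ, Finset.sum_div]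
    exact Finset.sum_congr rfl fun δ _ => by ring
  -- step 2 : second derivative of φ at x
  have step2 : ∀ α β : Fin n,
      pd2 n (fun z => (∑ δ, (pd n u δ z)^2) / 2) α β x
        = ∑ δ, (pd2 n u α δ x * pd2 n u β δ x
            + pd n u δ x * pd n (pd2 n u β δ) α x) := by
    intro α β
    have hev : (pd n (fun z => (∑ δ, (pd n u δ z)^2) / 2) β)
        =ᶠ[nhds x] (fun y => ∑ δ, pd n u δ y * pd2 n u β δ y) :=
      Filter.eventuallyEq_of_mem hxn (fun y hy => step1 y hy β)
    have e0 : pd2 n (fun z => (∑ δ, (pd n u δ z)^2) / 2) α β x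
        = pd n (fun y => ∑ δ, pd n u δ y * pd2 n u β δ y) α x :=
      pd_congr_nhds hev α
    rw [e0]
    rw [pd_sum Finset.univ (fun δ y => pd n u δ y * pd2 n u β δ y)
      (fun δ _ => (dAt1 x hx δ).mul (dAt2 x hx β δ)) α]
    exact Finset.sum_congr rfl fun δ _ =>
      pd_mul (dAt1 x hx δ) (dAt2 x hx β δ) α
  -- step 3 : differentiate the minimal surface equation
  have step3 : ∀ γ : Fin n,
      (∑ δ, 2 * pd n u δ x * pd2 n u γ δ x) * (∑ α, pd2 n u α α x)
        + (1 + ∑ δ, (pd n u δ x)^2) * (∑ α, pd n (pd2 n u α α) γ x)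
        - ∑ α, ∑ β, ((pd2 n u γ α x * pd n u β x + pd n u α x * pd2 n u γ β x) * pd2 n u α β x
            + pd n u α x * pd n u β x * pd n (pd2 n u α β) γ x) = 0 := by
    intro γ
    have dA : DifferentiableAt ℝ (fun y => 1 + ∑ δ, (pd n u δ y)^2) x :=
      (differentiableAt_const 1).add (dsum x hx)
    have dB : DifferentiableAt ℝ (fun y => ∑ α, pd2 n u α α y) x :=
      DifferentiableAt.fun_sum fun α _ => dAt2 x hx α α
    have dCterm : ∀ α β : Fin n,
        DifferentiableAt ℝ (fun y => pd n u α y * pd n u β y * pd2 n u α β y) x :=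
      fun α β => ((dAt1 x hx α).mul (dAt1 x hx β)).mul (dAt2 x hx α β)
    have hev0 : (fun y => (1 + ∑ δ, (pd n u δ y)^2) * (∑ α, pd2 n u α α y)
        - ∑ α, ∑ β, pd n u α y * pd n u β y * pd2 n u α β y) =ᶠ[nhds x] (fun _ => (0:ℝ)) :=
      Filter.eventuallyEq_of_mem hxn (fun y hy => heq y hy)
    have hzero : pd n (fun y => (1 + ∑ δ, (pd n u δ y)^2) * (∑ α, pd2 n u α α y)
        - ∑ α, ∑ β, pd n u α y * pd n u β y * pd2 n u α β y) γ x = 0 := by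
      rw [pd_congr_nhds hev0 γ]
      unfold pd
      rw [fderiv_fun_const]
      simp
    have esub := pd_sub (n := n)
      (f := fun y => (1 + ∑ δ, (pd n u δ y)^2) * (∑ α, pd2 n u α α y))
      (g := fun y => ∑ α, ∑ β, pd n u α y * pd n u β y * pd2 n u α β y)
      (dA.mul dB)
      (DifferentiableAt.fun_sum fun α _ => DifferentiableAt.fun_sum fun β _ => dCterm α β) γ
    have emul := pd_mul (n := n)
      (f := fun y => 1 + ∑ δ, (pd n u δ y)^2)
      (g := fun y => ∑ α, pd2 n u α α y) dA dB γ
    have eA : pd n (fun y => 1 + ∑ δ, (pd n u δ y)^2) γ x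
        = ∑ δ, 2 * pd n u δ x * pd2 n u γ δ x := by
      rw [pd_one_add (dsum x hx) γ]
      rw [pd_sum Finset.univ (fun δ y => (pd n u δ y)^2)
        (fun δ _ => (dAt1 x hx δ).pow 2) γ]
      exact Finset.sum_congr rfl fun δ _ => pd_sq (dAt1 x hx δ) γ
    have eB : pd n (fun y => ∑ α, pd2 n u α α y) γ x = ∑ α, pd n (pd2 n u α α) γ x :=
      pd_sum Finset.univ (fun α y => pd2 n u α α y) (fun α _ => dAt2 x hx α α) γ
    have eC : pd n (fun y => ∑ α, ∑ β, pd n u α y * pd n u β y * pd2 n u α β y) γ x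
        = ∑ α, ∑ β, ((pd2 n u γ α x * pd n u β x + pd n u α x * pd2 n u γ β x) * pd2 n u α β x
            + pd n u α x * pd n u β x * pd n (pd2 n u α β) γ x) := by
      rw [pd_sum Finset.univ (fun α y => ∑ β, pd n u α y * pd n u β y * pd2 n u α β y)
        (fun α _ => DifferentiableAt.fun_sum fun β _ => dCterm α β) γ]
      refine Finset.sum_congr rfl fun α _ => ?_
      rw [pd_sum Finset.univ (fun β y => pd n u α y * pd n u β y * pd2 n u α β y)
        (fun β _ => dCterm α β) γ]
      refine Finset.sum_congr rfl fun β _ => ?_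
      have em1 := pd_mul (n := n) (f := fun y => pd n u α y * pd n u β y)
        (g := fun y => pd2 n u α β y) ((dAt1 x hx α).mul (dAt1 x hx β)) (dAt2 x hx α β) γ
      have em2 := pd_mul (n := n) (f := fun y => pd n u α y)
        (g := fun y => pd n u β y) (dAt1 x hx α) (dAt1 x hx β) γ
      rw [em1, em2]
      rfl
    rw [esub, emul, eA, eB, eC] at hzero
    linarith [hzero]
  -- symmetries
  have hsymU : ∀ y ∈ U, ∀ α β : Fin n, pd2 n u α β y = pd2 n u β α y := fun y hy α β =>
    pd2_symm ((hu.contDiffAt (hU.mem_nhds hy)).of_le (by norm_num)) α β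
  have hsym : ∀ α β : Fin n, pd2 n u α β x = pd2 n u β α x := hsymU x hx
  have hlast : ∀ γ α β : Fin n, pd n (pd2 n u α β) γ x = pd n (pd2 n u β α) γ x :=
    fun γ α β => pd_congr_nhds
      (Filter.eventuallyEq_of_mem hxn (fun y hy => hsymU y hy α β)) γ
  have hfirst : ∀ γ α β : Fin n, pd n (pd2 n u α β) γ x = pd n (pd2 n u γ β) α x :=
    fun γ α β => pd2_symm ((h2 β).contDiffAt hxn) γ α
  have ht : ∀ α β δ : Fin n,
      pd n (pd2 n u β δ) α x = pd n (pd2 n u α β) δ x := by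
    intro α β δ
    rw [hlast α β δ, hfirst α δ β, hlast δ α β, hfirst δ β α, hlast β δ α, hfirst β α δ]
  -- assemble
  have hp : ∀ γ : Fin n, pd n (fun z => (∑ δ, (pd n u δ z)^2) / 2) γ x
      = ∑ δ, pd n u δ x * pd2 n u γ δ x := step1 x hx
  constructor
  · have key := key_algebra (fun γ => pd n u γ x) (fun α β => pd2 n u α β x)
      (fun γ α β => pd n (pd2 n u α β) γ x) hsym (fun α β δ => ht α β δ) step3
    simp only [hp, step2]
    exact key
  · have hS : (0:ℝ) ≤ ∑ γ, (pd n (fun z => (∑ δ, (pd n u δ z)^2) / 2) γ x)^2 :=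
      Finset.sum_nonneg fun γ _ => sq_nonneg _
    linarith
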